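/- Let (X,τ) be a topological space, V = ⟨V_a⟩ a π-net Souslin scheme on (X,τ) that covers X, and f a selector on V. Then (ℕ^ℕ, σ_{τ,f}) is a π-space. -/
import Mathlib


open Set Topology

namespace PiSpacePaper

/-- The restriction `p↾n` of `p : ℕ → ℕ`, as a list of length `n`. -/
def restrictSeq (p : ℕ → ℕ) (n : ℕ) : List ℕ := (List.range n).map p

/-- The basic clopen set `S_a` of the Baire space. -/
def cyl (a : List ℕ) : Set (ℕ → ℕ) := {p | restrictSeq p a.length = a}

/-- The fruit `⋂ n, V (p↾n)` of a branch `p` in a Souslin scheme `V`. -/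
def fruit {X : Type*} (V : List ℕ → Set X) (p : ℕ → ℕ) : Set X :=
  ⋂ n : ℕ, V (restrictSeq p n)

/-- A Souslin scheme `V` covers the set `s`. -/
def Covers {X : Type*} (V : List ℕ → Set X) (s : Set X) : Prop :=
  V [] = s ∧ ∀ a : List ℕ, V a = ⋃ n : ℕ, V (a ++ [n])

/-- A Souslin scheme `V` partitions the set `s`. -/
def Partitions {X : Type*} (V : List ℕ → Set X) (s : Set X) : Prop :=
  Covers V s ∧ ∀ (a : List ℕ) (n m : ℕ), n ≠ m → V (a ++ [n]) ∩ V (a ++ [m]) = ∅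

/-- A Souslin scheme is complete iff all fruits are nonempty. -/
def Complete {X : Type*} (V : List ℕ → Set X) : Prop :=
  ∀ p : ℕ → ℕ, (fruit V p).Nonempty

/-- A Souslin scheme has strict branches iff every fruit is a singleton. -/
def StrictBranches {X : Type*} (V : List ℕ → Set X) : Prop :=
  ∀ p : ℕ → ℕ, ∃ x : X, fruit V p = {x}

/-- A Souslin scheme is open iff all its members are open sets. -/
def OpenScheme {X : Type*} [TopologicalSpace X] (V : List ℕ → Set X) : Prop :=
  ∀ a : List ℕ, IsOpen (V a)

/-- `flesh V = ⋃ a, V a`. -/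
def flesh {X : Type*} (V : List ℕ → Set X) : Set X := ⋃ a : List ℕ, V a

/-- `branches V x = {q ∈ ℕ^ℕ : x ∈ fruit V q}`. -/
def branches {X : Type*} (V : List ℕ → Set X) (x : X) : Set (ℕ → ℕ) :=
  {q | x ∈ fruit V q}

/-- A family `γ` of subsets is a π-net for a space: all members are nonempty and every
nonempty open set contains a member. -/
def IsPiNet {X : Type*} [TopologicalSpace X] (γ : Set (Set X)) : Prop :=
  (∀ G ∈ γ, G.Nonempty) ∧
  ∀ U : Set X, IsOpen U → U.Nonempty → ∃ G ∈ γ, G ⊆ U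

/-- A family `γ` of subsets is a π-base for a space: all members are nonempty open sets
and every nonempty open set contains a member. -/
def IsPiBase {X : Type*} [TopologicalSpace X] (γ : Set (Set X)) : Prop :=
  (∀ G ∈ γ, IsOpen G ∧ G.Nonempty) ∧
  ∀ U : Set X, IsOpen U → U.Nonempty → ∃ G ∈ γ, G ⊆ U

/-- A π-space: there is an open Souslin scheme that partitions the space, has strict
branches, and whose family of members is a π-base. -/
def IsPiSpace (X : Type*) [TopologicalSpace X] : Prop :=
  ∃ V : List ℕ → Set X, OpenScheme V ∧ Partitions V Set.univ ∧ StrictBranches V ∧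
    IsPiBase {S : Set X | ∃ a : List ℕ, S = V a}

/-- A Lusin π-base for a space. -/
def IsLusinPiBase {X : Type*} [TopologicalSpace X] (V : List ℕ → Set X) : Prop :=
  OpenScheme V ∧ Partitions V Set.univ ∧ StrictBranches V ∧
  ∀ (x : X) (U : Set X), IsOpen U → x ∈ U →
    ∃ (a : List ℕ) (n : ℕ), x ∈ V a ∧ (⋃ i : ℕ, ⋃ _ : n ≤ i, V (a ++ [i])) ⊆ U

/-- A map is quasi-open iff the image of every nonempty open set has nonempty interior. -/
def IsQuasiOpen {X Y : Type*} [TopologicalSpace X] [TopologicalSpace Y] (f : X → Y) : Prop :=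
  ∀ U : Set X, IsOpen U → U.Nonempty → (interior (f '' U)).Nonempty

/-- A π-net Souslin scheme on a space `X`: for every finite sequence `a`, the family
`{V b : b ⊒ a}` is a π-net for the subspace `V a` of `X` (whose nonempty open sets are
exactly the nonempty sets `U ∩ V a` with `U` open in `X`). -/
def IsPiNetScheme {X : Type*} [TopologicalSpace X] (V : List ℕ → Set X) : Prop :=
  ∀ a : List ℕ,
    (∀ b : List ℕ, a <+: b → (V b).Nonempty) ∧
    ∀ U : Set X, IsOpen U → (U ∩ V a).Nonempty → ∃ b : List ℕ, a <+: b ∧ V b ⊆ U ∩ V a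

/-- A π-base Souslin scheme on a space is an open π-net Souslin scheme. -/
def IsPiBaseScheme {X : Type*} [TopologicalSpace X] (V : List ℕ → Set X) : Prop :=
  OpenScheme V ∧ IsPiNetScheme V

/-- A selector on a Souslin scheme `V`: a surjection of the Baire space onto `flesh V`
such that every fiber `f⁻¹(x)` is a dense subset of the subspace `branches V x` of the
Baire space. -/
def IsSelector {X : Type*} (V : List ℕ → Set X) (f : (ℕ → ℕ) → X) : Prop :=
  Set.range f = flesh V ∧
  ∀ x ∈ flesh V, f ⁻¹' {x} ⊆ branches V x ∧ branches V x ⊆ closure (f ⁻¹' {x})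

/-- The topology `σ_{τ,f}` on the Baire space, generated by the subbase consisting of the
`τ`-preimages under `f` together with the basic sets `S_a`. -/
def sigmaTop {X : Type*} [TopologicalSpace X] (f : (ℕ → ℕ) → X) :
    TopologicalSpace (ℕ → ℕ) :=
  TopologicalSpace.generateFrom
    ({S : Set (ℕ → ℕ) | ∃ U : Set X, IsOpen U ∧ S = f ⁻¹' U} ∪
      {S : Set (ℕ → ℕ) | ∃ a : List ℕ, S = cyl a})

/-- The Souslin scheme `V^g`, where `V^g_a = V_{g ∘ a}`. -/
def schemeComp {X : Type*} (V : List ℕ → Set X) (g : ℕ → ℕ) : List ℕ → Set X :=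
  fun a => V (a.map g)

/-- A subset of the Baire space is dense-in-itself iff it has no isolated points. -/
def DenseInItself (B : Set (ℕ → ℕ)) : Prop :=
  ∀ q ∈ B, q ∈ closure (B \ {q})

/-- `X` is a continuous open image of a π-space. -/
def IsContinuousOpenImageOfPiSpace (X : Type) [TopologicalSpace X] : Prop :=
  ∃ (Y : Type) (_ : TopologicalSpace Y) (f : Y → X),
    IsPiSpace Y ∧ Continuous f ∧ IsOpenMap f ∧ Function.Surjective f

/-- The topology `τ_N` on the Baire space generated by the sets `U \ A` with `U` open in
the Baire space and `A` nowhere dense in the Baire space. -/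
def tauN : TopologicalSpace (ℕ → ℕ) :=
  TopologicalSpace.generateFrom
    {S : Set (ℕ → ℕ) | ∃ U A : Set (ℕ → ℕ), IsOpen U ∧ IsNowhereDense A ∧ S = U \ A}

lemma restrictSeq_length (p : ℕ → ℕ) (n : ℕ) : (restrictSeq p n).length = n := by
  simp [restrictSeq]

lemma restrictSeq_succ (p : ℕ → ℕ) (n : ℕ) :
    restrictSeq p (n + 1) = restrictSeq p n ++ [p n] := by
  simp [restrictSeq, List.range_succ]

lemma restrictSeq_take (p : ℕ → ℕ) {m n : ℕ} (h : m ≤ n) :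
    (restrictSeq p n).take m = restrictSeq p m := by
  simp [restrictSeq, ← List.map_take, List.take_range, Nat.min_eq_left h]

lemma mem_cyl {p : ℕ → ℕ} {a : List ℕ} : p ∈ cyl a ↔ restrictSeq p a.length = a :=
  Iff.rfl

lemma mem_cyl_restrictSeq (p : ℕ → ℕ) (n : ℕ) : p ∈ cyl (restrictSeq p n) := by
  rw [mem_cyl, restrictSeq_length]

lemma cyl_mono {a b : List ℕ} (h : a <+: b) : cyl b ⊆ cyl a := by
  intro p hp
  rw [mem_cyl] at hp ⊢
  have hab : a = b.take a.length := List.prefix_iff_eq_take.mp h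
  calc restrictSeq p a.length = (restrictSeq p b.length).take a.length :=
        (restrictSeq_take p h.length_le).symm
    _ = b.take a.length := by rw [hp]
    _ = a := hab.symm

lemma cyl_nonempty (a : List ℕ) : (cyl a).Nonempty := by
  refine ⟨fun n => a.getD n 0, ?_⟩
  rw [mem_cyl]
  apply List.ext_getElem
  · simp [restrictSeq]
  · intro i h1 h2
    simp only [restrictSeq, List.getElem_map, List.getElem_range]
    exact List.getD_eq_getElem a 0 h2

lemma prefix_comparable {p : ℕ → ℕ} {a b : List ℕ} (ha : p ∈ cyl a) (hb : p ∈ cyl b) :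
    a <+: b ∨ b <+: a := by
  rw [mem_cyl] at ha hb
  rcases le_total a.length b.length with h | h
  · left
    rw [← ha, ← hb, ← restrictSeq_take p h]
    exact List.take_prefix _ _
  · right
    rw [← ha, ← hb, ← restrictSeq_take p h]
    exact List.take_prefix _ _

lemma selector_mem {X : Type} (V : List ℕ → Set X) (f : (ℕ → ℕ) → X)
    (hf : IsSelector V f) (p : ℕ → ℕ) (n : ℕ) : f p ∈ V (restrictSeq p n) := by
  have h1 : f p ∈ flesh V := hf.1 ▸ Set.mem_range_self p
  have h2 : p ∈ branches V (f p) := (hf.2 (f p) h1).1 rfl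
  exact Set.mem_iInter.mp h2 n

lemma sigma_open_basis {X : Type} [TopologicalSpace X] (f : (ℕ → ℕ) → X)
    {O : Set (ℕ → ℕ)}
    (hO : TopologicalSpace.GenerateOpen
      ({S : Set (ℕ → ℕ) | ∃ U : Set X, IsOpen U ∧ S = f ⁻¹' U} ∪
        {S : Set (ℕ → ℕ) | ∃ a : List ℕ, S = cyl a}) O) :
    ∀ p ∈ O, ∃ (a : List ℕ) (U : Set X), IsOpen U ∧ p ∈ cyl a ∧ f p ∈ U ∧
      cyl a ∩ f ⁻¹' U ⊆ O := by
  induction hO with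
  | basic s hs =>
    intro p hp
    rcases hs with ⟨U, hU, rfl⟩ | ⟨a, rfl⟩
    · exact ⟨[], U, hU, rfl, hp, fun q hq => hq.2⟩
    · exact ⟨a, Set.univ, isOpen_univ, hp, trivial, fun q hq => hq.1⟩
  | univ => exact fun p _ => ⟨[], Set.univ, isOpen_univ, rfl, trivial, fun _ _ => trivial⟩
  | inter s t _ _ ihs iht =>
    intro p hp
    obtain ⟨a, U, hU, hpa, hpU, hsub⟩ := ihs p hp.1
    obtain ⟨b, U', hU', hpb, hpU', hsub'⟩ := iht p hp.2
    rcases prefix_comparable hpa hpb with h | h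
    · exact ⟨b, U ∩ U', hU.inter hU', hpb, ⟨hpU, hpU'⟩,
        fun q hq => ⟨hsub ⟨cyl_mono h hq.1, hq.2.1⟩, hsub' ⟨hq.1, hq.2.2⟩⟩⟩
    · exact ⟨a, U ∩ U', hU.inter hU', hpa, ⟨hpU, hpU'⟩,
        fun q hq => ⟨hsub ⟨hq.1, hq.2.1⟩, hsub' ⟨cyl_mono h hq.1, hq.2.2⟩⟩⟩
  | sUnion S _ ih =>
    intro p hp
    obtain ⟨s, hs, hps⟩ := hp
    obtain ⟨a, U, hU, hpa, hpU, hsub⟩ := ih s hs p hps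
    exact ⟨a, U, hU, hpa, hpU, fun q hq => ⟨s, hs, hsub hq⟩⟩

/-- If V is a π-net Souslin scheme on (X,τ) covering X and f is a selector
on V, then (ℕ^ℕ, σ_{τ,f}) is a π-space. -/
theorem statement14 {X : Type} [TopologicalSpace X] (V : List ℕ → Set X)
    (hnet : IsPiNetScheme V) (hcov : Covers V Set.univ)
    (f : (ℕ → ℕ) → X) (hf : IsSelector V f) :
    @IsPiSpace (ℕ → ℕ) (sigmaTop f) := by
  letI := sigmaTop f
  refine ⟨cyl, ?_, ⟨⟨Set.eq_univ_of_forall fun p => rfl, ?_⟩, ?_⟩, ?_, ?_, ?_⟩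
  · -- open scheme
    intro a
    exact TopologicalSpace.isOpen_generateFrom_of_mem (Or.inr ⟨a, rfl⟩)
  · -- covers
    intro a
    ext p
    simp only [Set.mem_iUnion]
    constructor
    · intro hp
      refine ⟨p a.length, ?_⟩
      rw [mem_cyl] at hp ⊢
      rw [List.length_append, List.length_singleton, restrictSeq_succ, hp]
    · rintro ⟨n, hn⟩
      exact cyl_mono (List.prefix_append a [n]) hn
  · -- disjoint
    intro a n m hnm
    ext p
    simp only [Set.mem_inter_iff, Set.mem_empty_iff_false, iff_false, not_and]
    intro h1 h2
    rw [mem_cyl] at h1 h2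
    have hl : (a ++ [n]).length = (a ++ [m]).length := by simp
    rw [hl] at h1
    exact hnm (by simpa using h1.symm.trans h2)
  · -- strict branches
    intro p
    refine ⟨p, ?_⟩
    ext q
    simp only [fruit, Set.mem_iInter, Set.mem_singleton_iff]
    constructor
    · intro h
      funext k
      have hk := h (k + 1)
      rw [mem_cyl, restrictSeq_length] at hk
      have := congrArg (fun l => l.getD k 0) hk
      simpa [restrictSeq, List.getD_eq_getElem] using this
    · rintro rfl
      exact fun n => mem_cyl_restrictSeq q n
  · -- members of π-base: open and nonempty
    rintro G ⟨a, rfl⟩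
    exact ⟨TopologicalSpace.isOpen_generateFrom_of_mem (Or.inr ⟨a, rfl⟩), cyl_nonempty a⟩
  · -- π-base property
    intro O hO ⟨p, hp⟩
    have hgen : TopologicalSpace.GenerateOpen _ O := hO
    obtain ⟨a, U, hU, hpa, hpU, hsub⟩ := sigma_open_basis f hgen p hp
    have hfa : f p ∈ V a := by
      have := selector_mem V f hf p a.length
      rwa [mem_cyl.mp hpa] at this
    obtain ⟨b, hab, hVb⟩ := (hnet a).2 U hU ⟨f p, hpU, hfa⟩
    refine ⟨cyl b, ⟨b, rfl⟩, fun q hq => hsub ⟨cyl_mono hab hq, ?_⟩⟩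
    have := selector_mem V f hf q b.length
    rw [mem_cyl.mp hq] at this
    exact (hVb this).1
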